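/- arXiv:0905.2708 — 2 statements merged into one kernel-verified Lean document; each statement's English description precedes it below -/
import Mathlib

section
/- If φ: Mₙ(ℂ) → Mₙ(ℂ) is q-positive and 0 ≤ s₁ ≤ s₂, then φ^(s₁) q-dominates φ^(s₂); that is, φ^(s₁)(I + t φ^(s₁))⁻¹ − φ^(s₂)(I + t φ^(s₂))⁻¹ is completely positive for all t ≥ 0. In fact this difference equals (s₂ − s₁)·(φ(I + (s₂+t)φ)⁻¹) ∘ (φ(I + (s₁+t)φ)⁻¹). -/
open scoped ComplexOrder BigOperators
open Matrix

abbrev MatC (n : ℕ) := Matrix (Fin n) (Fin n) ℂ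

/-- Complete positivity of a linear map on `Mₙ(ℂ)`:
for all finite families `Aᵢ`, `fᵢ`, `∑ ⟨fᵢ, φ(Aᵢ* Aⱼ) fⱼ⟩ ≥ 0`. -/
def IsCP {n : ℕ} (φ : Module.End ℂ (MatC n)) : Prop :=
  ∀ (m : ℕ) (A : Fin m → MatC n) (f : Fin m → (Fin n → ℂ)),
    0 ≤ ∑ i, ∑ j, star (f i) ⬝ᵥ ((φ ((A i)ᴴ * A j)) *ᵥ f j)

/-- `φ` has no negative (real) eigenvalues. -/
def NoNegEig {n : ℕ} (φ : Module.End ℂ (MatC n)) : Prop :=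
  ∀ r : ℝ, r < 0 → ¬ Module.End.HasEigenvalue φ (r : ℂ)

/-- `φ^(t) = φ ∘ (I + t φ)⁻¹`. -/
noncomputable def qRes {n : ℕ} (φ : Module.End ℂ (MatC n)) (t : ℝ) :
    Module.End ℂ (MatC n) :=
  φ * Ring.inverse (1 + (t : ℂ) • φ)

/-- `φ` is q-positive. -/
def IsQPos {n : ℕ} (φ : Module.End ℂ (MatC n)) : Prop :=
  NoNegEig φ ∧ ∀ t : ℝ, 0 ≤ t → IsCP (qRes φ t)

/-- `φ ≥_q ψ` : `φ(I+tφ)⁻¹ − ψ(I+tψ)⁻¹` is completely positive for all `t ≥ 0`. -/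
def qLE {n : ℕ} (ψ φ : Module.End ℂ (MatC n)) : Prop :=
  ∀ t : ℝ, 0 ≤ t → IsCP (qRes φ t - qRes ψ t)

/-- `φ` is q-pure: its q-subordinates are exactly `{0} ∪ {φ^(s) : s ≥ 0}`. -/
def IsQPure {n : ℕ} (φ : Module.End ℂ (MatC n)) : Prop :=
  IsQPos φ ∧ ∀ ψ : Module.End ℂ (MatC n),
    (IsQPos ψ ∧ qLE ψ φ) ↔ (ψ = 0 ∨ ∃ s : ℝ, 0 ≤ s ∧ ψ = qRes φ s)

/-!
Both claims are resolvent calculus. Since `φ` has no negative eigenvalues, `I + aφ` is invertible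
for every `a ≥ 0`, and all these inverses commute with `φ`. This gives the semigroup law
`(φ^(s))^(t) = φ^(s+t)` and the resolvent identity `φ^(a) − φ^(b) = (b − a) φ^(b) φ^(a)`, which
together yield the displayed formula. Each factor `φ^(sᵢ+t)` is completely positive by
q-positivity, and completely positive maps are closed under composition (through Choi's Kraus
decomposition) and under nonnegative scaling.
-/

section Resolvent

variable {K A : Type*} [CommRing K] [Ring A] [Algebra K A] {x : A}

lemma commute_self_one_add_smul (a : K) : Commute x (1 + a • x) :=
  (Commute.one_right x).add_right ((Commute.refl x).smul_right a)

lemma mul_inverse_one_add_smul_sub_mul_inverse_one_add_smul {a b : K}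
    (ha : IsUnit (1 + a • x)) (hb : IsUnit (1 + b • x)) :
    x * Ring.inverse (1 + a • x) - x * Ring.inverse (1 + b • x) =
      (b - a) • (x * Ring.inverse (1 + b • x) * (x * Ring.inverse (1 + a • x))) := by
  obtain ⟨u, hu⟩ := ha
  obtain ⟨v, hv⟩ := hb
  have hxu : Commute x ↑u⁻¹ := (hu ▸ commute_self_one_add_smul a).units_inv_right
  have hxv : Commute x ↑v⁻¹ := (hv ▸ commute_self_one_add_smul b).units_inv_right
  have huv : Commute (↑u⁻¹ : A) ↑v⁻¹ := by
    refine Commute.units_inv_right (Commute.units_inv_left ?_)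
    rw [hu, hv]
    exact (Commute.one_left _).add_left ((commute_self_one_add_smul b).smul_left a)
  have hvu : (v : A) - u = (b - a) • x := by rw [hu, hv, sub_smul]; abel
  rw [← hu, ← hv, Ring.inverse_unit, Ring.inverse_unit]
  calc x * ↑u⁻¹ - x * ↑v⁻¹ = x * ↑u⁻¹ * (v - u) * ↑v⁻¹ := by
        simp only [mul_sub, sub_mul, mul_assoc, Units.mul_inv, Units.inv_mul, mul_one]
    _ = (b - a) • (x * (x * (↑u⁻¹ * ↑v⁻¹))) := by
        rw [hvu, mul_smul_comm, smul_mul_assoc, mul_assoc x, ← hxu.eq, mul_assoc, mul_assoc]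
    _ = (b - a) • (x * ↑v⁻¹ * (x * ↑u⁻¹)) := by
        conv_lhs => rw [huv.eq, ← mul_assoc x ↑v⁻¹, hxv.eq, mul_assoc, ← mul_assoc x]

lemma mul_inverse_one_add_smul_mul_inverse_one_add_smul {s t : K}
    (hs : IsUnit (1 + s • x)) (hst : IsUnit (1 + (s + t) • x)) :
    x * Ring.inverse (1 + s • x) * Ring.inverse (1 + t • (x * Ring.inverse (1 + s • x))) =
      x * Ring.inverse (1 + (s + t) • x) := by
  obtain ⟨u, hu⟩ := hs
  obtain ⟨v, hv⟩ := hst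
  have hfactor : 1 + t • (x * ↑u⁻¹) = ↑(v * u⁻¹) := by
    rw [Units.val_mul, hv, add_smul, ← add_assoc, ← hu, add_mul, Units.mul_inv, smul_mul_assoc]
  rw [← hu, ← hv, Ring.inverse_unit, hfactor, Ring.inverse_unit, Ring.inverse_unit,
    _root_.mul_inv_rev, inv_inv, Units.val_mul, mul_assoc, Units.inv_mul_cancel_left]

end Resolvent

lemma Module.End.isUnit_one_add_smul_of_not_hasEigenvalue {K V : Type*} [Field K]
    [AddCommGroup V] [Module K V] [FiniteDimensional K V] {f : Module.End K V} {a : K}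
    (ha : a ≠ 0) (hf : ¬ f.HasEigenvalue (-a⁻¹)) : IsUnit (1 + a • f) := by
  rw [Module.End.hasEigenvalue_iff_mem_spectrum, spectrum.mem_iff, not_not] at hf
  have hfactor : 1 + a • f = (-a) • (algebraMap K (Module.End K V) (-a⁻¹) - f) := by
    rw [Algebra.algebraMap_eq_smul_one, smul_sub, smul_smul]
    simp [ha]
  rwa [hfactor, ← Units.val_mk0 (neg_ne_zero.mpr ha), ← Units.smul_def, isUnit_smul_iff]

lemma Matrix.posSemidef_of_dotProduct_mulVec_nonneg {m : Type*} [Fintype m] [DecidableEq m]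
    {M : Matrix m m ℂ} (hM : ∀ x : m → ℂ, 0 ≤ star x ⬝ᵥ (M *ᵥ x)) : M.PosSemidef := by
  rw [← Matrix.isPositive_toEuclideanLin_iff, LinearMap.isPositive_iff_complex]
  intro x
  have hx := hM x.ofLp
  have hself : x.ofLp ⬝ᵥ star (M *ᵥ x.ofLp) = star x.ofLp ⬝ᵥ M *ᵥ x.ofLp := by
    rw [dotProduct_star, dotProduct_comm, IsSelfAdjoint.of_nonneg hx]
  simp only [EuclideanSpace.inner_eq_star_dotProduct, ofLp_toLpLin, toLin'_apply,
    RCLike.re_to_complex, hself]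
  exact ⟨(Complex.eq_re_of_ofReal_le (by exact_mod_cast hx)).symm, (Complex.nonneg_iff.1 hx).1⟩

section CompletelyPositive

variable {n : ℕ}

def choiMatrix (φ : Module.End ℂ (MatC n)) : Matrix (Fin n × Fin n) (Fin n × Fin n) ℂ :=
  Matrix.of fun p q => φ (single p.1 q.1 1) p.2 q.2

lemma apply_eq_sum_choiMatrix (φ : Module.End ℂ (MatC n)) (X : MatC n) (k l : Fin n) :
    φ X k l = ∑ i, ∑ j, X i j * choiMatrix φ (i, k) (j, l) := by
  conv_lhs => rw [matrix_eq_sum_single X]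
  have hsingle (i j : Fin n) : single i j (X i j) = X i j • single i j 1 := by
    rw [smul_single, smul_eq_mul, mul_one]
  simp only [map_sum, hsingle, map_smul, Matrix.sum_apply, Matrix.smul_apply, smul_eq_mul,
    choiMatrix, Matrix.of_apply]

variable {φ ψ : Module.End ℂ (MatC n)}

lemma IsCP.posSemidef_choiMatrix (hφ : IsCP φ) : (choiMatrix φ).PosSemidef := by
  refine Matrix.posSemidef_of_dotProduct_mulVec_nonneg fun x => ?_
  cases n with
  | zero => simp [dotProduct]
  | succ n =>
    -- `E₀ᵢᴴ E₀ⱼ = Eᵢⱼ`: testing complete positivity on the rows `E₀ᵢ` gives the Choi form.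
    have hrows (i j : Fin (n + 1)) : (single 0 i (1 : ℂ))ᴴ * single 0 j 1 = single i j 1 := by
      rw [conjTranspose_single, star_one, single_mul_single_same, one_mul]
    have hcp := hφ (n + 1) (fun i => single 0 i 1) (fun i k => x (i, k))
    simp only [hrows] at hcp
    convert hcp using 1
    simp only [dotProduct, mulVec, choiMatrix, Fintype.sum_prod_type, Finset.mul_sum,
      Matrix.of_apply, Pi.star_apply]
    exact Finset.sum_congr rfl fun _ _ => Finset.sum_comm

lemma IsCP.exists_kraus (hφ : IsCP φ) :
    ∃ (m : ℕ) (K : Fin m → MatC n), ∀ X, φ X = ∑ a, K a * X * (K a)ᴴ := by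
  obtain ⟨m, v, hv⟩ := Matrix.posSemidef_iff_eq_sum_vecMulVec.mp hφ.posSemidef_choiMatrix
  refine ⟨m, fun a => Matrix.of fun k i => v a (i, k), fun X => ?_⟩
  ext k l
  rw [apply_eq_sum_choiMatrix, hv]
  simp only [Matrix.mul_apply, vecMulVec_apply, Matrix.sum_apply, Finset.mul_sum, Finset.sum_mul,
    Matrix.of_apply, conjTranspose_apply, Pi.star_apply]
  rw [Finset.sum_comm_cycle]
  refine Finset.sum_congr rfl fun a _ => ?_
  rw [Finset.sum_comm]
  exact Finset.sum_congr rfl fun j _ => Finset.sum_congr rfl fun i _ => by ring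

lemma IsCP.mul (hφ : IsCP φ) (hψ : IsCP ψ) : IsCP (φ * ψ) := by
  obtain ⟨r, K, hK⟩ := hφ.exists_kraus
  intro m A f
  have hterm (i j : Fin m) : star (f i) ⬝ᵥ ((φ * ψ) ((A i)ᴴ * A j) *ᵥ f j) =
      ∑ a, star ((K a)ᴴ *ᵥ f i) ⬝ᵥ (ψ ((A i)ᴴ * A j) *ᵥ ((K a)ᴴ *ᵥ f j)) := by
    rw [Module.End.mul_apply, hK, Matrix.sum_mulVec, dotProduct_sum]
    refine Finset.sum_congr rfl fun a _ => ?_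
    rw [← mulVec_mulVec, ← mulVec_mulVec, star_mulVec, dotProduct_mulVec,
      conjTranspose_conjTranspose]
  simp only [hterm]
  rw [Finset.sum_comm_cycle]
  exact Finset.sum_nonneg fun a _ => hψ m A fun i => (K a)ᴴ *ᵥ f i

lemma IsCP.smul_of_nonneg (hφ : IsCP φ) {c : ℂ} (hc : 0 ≤ c) : IsCP (c • φ) := by
  intro m A f
  simp only [LinearMap.smul_apply, Matrix.smul_mulVec, dotProduct_smul, smul_eq_mul,
    ← Finset.mul_sum]
  exact mul_nonneg hc (hφ m A f)

end CompletelyPositive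

section QResolvent

variable {n : ℕ} {φ : Module.End ℂ (MatC n)}

lemma NoNegEig.isUnit_one_add_smul (hφ : NoNegEig φ) {a : ℝ} (ha : 0 ≤ a) :
    IsUnit (1 + (a : ℂ) • φ) := by
  rcases ha.eq_or_lt with rfl | ha
  · simp
  · refine Module.End.isUnit_one_add_smul_of_not_hasEigenvalue (by exact_mod_cast ha.ne') ?_
    simpa using hφ (-a⁻¹) (by simpa using ha)

lemma qRes_qRes (hφ : NoNegEig φ) {s t : ℝ} (hs : 0 ≤ s) (ht : 0 ≤ t) :
    qRes (qRes φ s) t = qRes φ (s + t) := by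
  have hst := hφ.isUnit_one_add_smul (add_nonneg hs ht)
  rw [Complex.ofReal_add] at hst
  rw [qRes, qRes, qRes, Complex.ofReal_add]
  exact mul_inverse_one_add_smul_mul_inverse_one_add_smul (hφ.isUnit_one_add_smul hs) hst

lemma qRes_sub_qRes (hφ : NoNegEig φ) {a b : ℝ} (ha : 0 ≤ a) (hb : 0 ≤ b) :
    qRes φ a - qRes φ b = ((b - a : ℝ) : ℂ) • (qRes φ b * qRes φ a) := by
  rw [Complex.ofReal_sub]
  exact mul_inverse_one_add_smul_sub_mul_inverse_one_add_smul
    (hφ.isUnit_one_add_smul ha) (hφ.isUnit_one_add_smul hb)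

end QResolvent

/-- For q-positive `φ` and `0 ≤ s₁ ≤ s₂`, `φ^(s₁) ≥_q φ^(s₂)`, and the difference of
resolvents equals `(s₂−s₁)·φ(I+(s₂+t)φ)⁻¹ ∘ φ(I+(s₁+t)φ)⁻¹`. -/
theorem stmt1 {n : ℕ} (φ : Module.End ℂ (MatC n)) (hφ : IsQPos φ)
    (s₁ s₂ : ℝ) (h1 : 0 ≤ s₁) (h12 : s₁ ≤ s₂) :
    qLE (qRes φ s₂) (qRes φ s₁) ∧
    ∀ t : ℝ, 0 ≤ t →
      qRes (qRes φ s₁) t - qRes (qRes φ s₂) t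
        = ((s₂ - s₁ : ℝ) : ℂ) • (qRes φ (s₂ + t) * qRes φ (s₁ + t)) := by
  obtain ⟨hneg, hcp⟩ := hφ
  have h2 : 0 ≤ s₂ := h1.trans h12
  have hdiff (t : ℝ) (ht : 0 ≤ t) :
      qRes (qRes φ s₁) t - qRes (qRes φ s₂) t
        = ((s₂ - s₁ : ℝ) : ℂ) • (qRes φ (s₂ + t) * qRes φ (s₁ + t)) := by
    rw [qRes_qRes hneg h1 ht, qRes_qRes hneg h2 ht,
      qRes_sub_qRes hneg (add_nonneg h1 ht) (add_nonneg h2 ht), add_sub_add_right_eq_sub]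
  refine ⟨fun t ht => ?_, hdiff⟩
  rw [hdiff t ht]
  exact ((hcp _ (add_nonneg h2 ht)).mul (hcp _ (add_nonneg h1 ht))).smul_of_nonneg
    (Complex.zero_le_real.mpr (sub_nonneg.mpr h12))
end

section
/- Let φ: Mₙ(ℂ) → Mₙ(ℂ) be completely positive and for ε ∈ [0,1] set φ_ε = εI + (1−ε)φ. If there is a monotonically decreasing sequence ε_k ↓ 0 of positives such that φ_{ε_k} is q-positive for every k, then φ is q-positive. -/
open scoped ComplexOrder BigOperators
open Matrix

/-- `φ_ε = ε I + (1−ε) φ`. -/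
noncomputable def epsMap {n : ℕ} (φ : Module.End ℂ (MatC n)) (ε : ℝ) :
    Module.End ℂ (MatC n) :=
  (ε : ℂ) • 1 + ((1 - ε : ℝ) : ℂ) • φ

/-!
A negative eigenvalue `r` of `φ` would give the negative eigenvalue `ε + (1 - ε) r` of `φ_ε`
for small `ε`, so `φ` has none and `I + tφ` is invertible for `t ≥ 0`. Hence
`ε ↦ φ_ε (I + t φ_ε)⁻¹` is continuous at `0`, and complete positivity, a closed condition,
passes to the limit `φ (I + t φ)⁻¹`.
-/

open Filter Topology

namespace Module.End

variable {K V : Type*} [Field K] [AddCommGroup V] [Module K V]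

theorem HasEigenvalue.smul_one_add_smul {f : End K V} {μ : K} (h : f.HasEigenvalue μ)
    (a b : K) : (a • 1 + b • f).HasEigenvalue (a + b * μ) := by
  obtain ⟨v, hv⟩ := h.exists_hasEigenvector
  refine hasEigenvalue_of_hasEigenvector ⟨mem_eigenspace_iff.mpr ?_, hv.2⟩
  simp [hv.apply_eq_smul, smul_smul, add_smul]

theorem isUnit_one_add_smul_of_not_hasEigenvalue_s12 [FiniteDimensional K V] {f : End K V}
    {t : K} (ht : t ≠ 0) (h : ¬ f.HasEigenvalue (-t⁻¹)) : IsUnit (1 + t • f) := by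
  rw [hasEigenvalue_iff_mem_spectrum, spectrum.notMem_iff] at h
  have : 1 + t • f = (-t) • (algebraMap K (End K V) (-t⁻¹) - f) := by
    rw [Algebra.algebraMap_eq_smul_one, smul_sub, smul_smul]
    field_simp
    simp
  rw [this, Algebra.smul_def]
  exact ((neg_ne_zero.mpr ht).isUnit.map _).mul h

end Module.End

theorem map_ringInverse {F A B : Type*} [Semiring A] [Semiring B] [EquivLike F A B]
    [RingEquivClass F A B] (e : F) (x : A) : e (Ring.inverse x) = Ring.inverse (e x) := by
  by_cases hx : IsUnit x
  · rw [← Ring.inverse_mul_cancel_left (e x) (e (Ring.inverse x)) (hx.map e), ← map_mul,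
      Ring.mul_inverse_cancel x hx, map_one, mul_one]
  · rw [Ring.inverse_non_unit x hx, Ring.inverse_non_unit _ ((isUnit_map_iff e x).not.mpr hx),
      map_zero]

theorem NoNegEig.isUnit_one_add_smul_s12 {n : ℕ} {φ : Module.End ℂ (MatC n)} (h : NoNegEig φ)
    {t : ℝ} (ht : 0 ≤ t) : IsUnit (1 + (t : ℂ) • φ) := by
  rcases ht.eq_or_lt with rfl | ht
  · simp
  refine Module.End.isUnit_one_add_smul_of_not_hasEigenvalue_s12 (by exact_mod_cast ht.ne') ?_
  exact_mod_cast h (-t⁻¹) (by simpa using ht)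

theorem NoNegEig.of_tendsto_epsMap {n : ℕ} {φ : Module.End ℂ (MatC n)} {ι : Type*}
    {l : Filter ι} [l.NeBot] {ε : ι → ℝ} (hlim : Tendsto ε l (𝓝 0))
    (h : ∀ i, NoNegEig (epsMap φ (ε i))) : NoNegEig φ := by
  intro r hr hφ
  have hμ : Tendsto (fun i => ε i + (1 - ε i) * r) l (𝓝 r) := by
    have hc : Continuous fun x : ℝ => x + (1 - x) * r := by fun_prop
    exact (hc.tendsto' 0 r (by simp)).comp hlim
  obtain ⟨i, hi⟩ := (hμ.eventually_lt_const hr).exists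
  refine h i _ hi ?_
  simpa [epsMap] using hφ.smul_one_add_smul (ε i : ℂ) ((1 - ε i : ℝ) : ℂ)

/-- `Module.End` carries no topology; limits of endomorphisms are taken through their matrices
in the standard basis. -/
noncomputable def endToMatrix (n : ℕ) :
    Module.End ℂ (MatC n) ≃ₐ[ℂ] Matrix (Fin n × Fin n) (Fin n × Fin n) ℂ :=
  LinearMap.toMatrixAlgEquiv (Matrix.stdBasis ℂ (Fin n) (Fin n))

theorem isClosed_setOf_isCP_endToMatrix_symm (n : ℕ) :
    IsClosed {M | IsCP ((endToMatrix n).symm M)} := by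
  simp only [IsCP, Set.ofPred_forall]
  refine isClosed_iInter fun m => isClosed_iInter fun A => isClosed_iInter fun f => ?_
  refine (isClosed_Ici (a := (0 : ℂ))).preimage ?_
  have hap : ∀ X : MatC n, Continuous fun M => (endToMatrix n).symm M X := fun X =>
    (LinearMap.applyₗ X ∘ₗ (endToMatrix n).symm.toLinearMap).continuous_of_finiteDimensional
  fun_prop

theorem IsCP.of_tendsto {n : ℕ} {ι : Type*} {l : Filter ι} [l.NeBot]
    {ψ : ι → Module.End ℂ (MatC n)} {ψ₀ : Module.End ℂ (MatC n)}
    (hlim : Tendsto (fun i => endToMatrix n (ψ i)) l (𝓝 (endToMatrix n ψ₀)))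
    (h : ∀ᶠ i in l, IsCP (ψ i)) : IsCP ψ₀ := by
  simpa using (isClosed_setOf_isCP_endToMatrix_symm n).mem_of_tendsto hlim (by simpa using h)

theorem continuousAt_endToMatrix_qRes {n : ℕ} {X : Type*} [TopologicalSpace X]
    {ψ : X → Module.End ℂ (MatC n)} {x₀ : X} {t : ℝ}
    (hψ : ContinuousAt (fun x => endToMatrix n (ψ x)) x₀)
    (hu : IsUnit (1 + (t : ℂ) • ψ x₀)) :
    ContinuousAt (fun x => endToMatrix n (qRes (ψ x) t)) x₀ := by
  have hdet := (Matrix.isUnit_iff_isUnit_det _).mp (hu.map (endToMatrix n))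
  simp only [qRes, map_mul, map_ringInverse, map_add, map_one, map_smul,
    ← Matrix.nonsing_inv_eq_ringInverse] at hdet ⊢
  refine hψ.mul ((continuousAt_matrix_inv _ ?_).comp
    (continuousAt_const.add (hψ.const_smul (t : ℂ))))
  rw [Ring.inverse_eq_inv']
  exact continuousAt_inv₀ hdet.ne_zero

theorem continuous_endToMatrix_epsMap {n : ℕ} (φ : Module.End ℂ (MatC n)) :
    Continuous fun x => endToMatrix n (epsMap φ x) := by
  simp only [epsMap, map_add, map_smul, map_one]
  fun_prop

theorem epsMap_zero {n : ℕ} (φ : Module.End ℂ (MatC n)) : epsMap φ 0 = φ := by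
  simp [epsMap]

theorem stmt12_general {n : ℕ} (φ : Module.End ℂ (MatC n)) (ε : ℕ → ℝ)
    (hlim : Filter.Tendsto ε Filter.atTop (nhds 0))
    (hq : ∀ k, IsQPos (epsMap φ (ε k))) :
    IsQPos φ := by
  have hne : NoNegEig φ := .of_tendsto_epsMap hlim fun k => (hq k).1
  refine ⟨hne, fun t ht => ?_⟩
  have hcont : ContinuousAt (fun x => endToMatrix n (qRes (epsMap φ x) t)) 0 :=
    continuousAt_endToMatrix_qRes (continuous_endToMatrix_epsMap φ).continuousAt
      (by simpa [epsMap_zero] using hne.isUnit_one_add_smul_s12 ht)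
  have hcp := IsCP.of_tendsto (hcont.tendsto.comp hlim) (.of_forall fun k => (hq k).2 t ht)
  rwa [epsMap_zero] at hcp

/-- If `φ` is CP and `φ_{ε_k}` is q-positive along a decreasing positive sequence
`ε_k ↓ 0`, then `φ` is q-positive. -/
theorem stmt12 {n : ℕ} (φ : Module.End ℂ (MatC n)) (hcp : IsCP φ)
    (ε : ℕ → ℝ) (hpos : ∀ k, 0 < ε k) (hanti : Antitone ε)
    (hlim : Filter.Tendsto ε Filter.atTop (nhds 0))
    (hq : ∀ k, IsQPos (epsMap φ (ε k))) :
    IsQPos φ :=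
  stmt12_general φ ε hlim hq
end
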